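/- arXiv:2305.05522 — 4 statements merged into one kernel-verified Lean document; each statement's English description precedes it below -/
import Mathlib

section
/- With f(x) = x^((k+p^a(p-1))p^t) + x^((k-p^a(p-1))p^t), p an odd prime, p^(2a+1) | k, k > p^a(p-1), and v = min(v_p(k)-2a-1, t): for any integer n coprime to p, v_p(f'(n)) ≥ 2a + t + v + 1, and if v < t then v_p(f'(n)) = 2a + t + v + 1 exactly. -/
open Polynomial

private lemma aux_pow_sub_one (p : ℕ) (hp : p.Prime) (c : ℤ) (h : (p:ℤ) ∣ c - 1) (j : ℕ) :
    (p:ℤ)^(j+1) ∣ c^(p^j) - 1 := by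
  induction j with
  | zero => simpa using h
  | succ j ih =>
    have hd : (p:ℤ) ∣ c^(p^j) - 1 := dvd_trans (dvd_pow_self _ (Nat.succ_ne_zero j)) ih
    have hsum : (p:ℤ) ∣ ∑ i ∈ Finset.range p, (c^(p^j))^i := by
      have h1 : ((c : ZMod p))^(p^j) = 1 := by
        have := (ZMod.intCast_zmod_eq_zero_iff_dvd _ p).2 hd
        push_cast at this
        exact sub_eq_zero.mp this
      have : ((∑ i ∈ Finset.range p, (c^(p^j))^i : ℤ) : ZMod p) = 0 := by
        push_cast
        simp [h1, CharP.cast_eq_zero]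
      exact (ZMod.intCast_zmod_eq_zero_iff_dvd _ p).1 this
    have key : c^(p^(j+1)) - 1 = (∑ i ∈ Finset.range p, (c^(p^j))^i) * (c^(p^j) - 1) := by
      rw [geom_sum_mul, ← pow_mul, ← pow_succ]
    calc (p:ℤ)^(j+1+1) = p * (p:ℤ)^(j+1) := by ring
    _ ∣ (∑ i ∈ Finset.range p, (c^(p^j))^i) * (c^(p^j) - 1) := mul_dvd_mul hsum ih
    _ = c^(p^(j+1)) - 1 := key.symm

private lemma aux_padicValInt (p : ℕ) (hp : p.Prime) (e : ℕ) (c : ℤ) (hc : ¬ (p:ℤ) ∣ c) :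
    padicValInt p ((p:ℤ)^e * c) = e := by
  haveI := Fact.mk hp
  have hc0 : c ≠ 0 := by rintro rfl; exact hc (dvd_zero _)
  have hp0 : ((p:ℤ))^e ≠ 0 := pow_ne_zero _ (Int.natCast_ne_zero.2 hp.pos.ne')
  rw [padicValInt.mul hp0 hc0, padicValInt.eq_zero_of_not_dvd hc]
  have h2 : ((p:ℤ)^e) = ((p^e : ℕ) : ℤ) := by push_cast; ring
  rw [h2, padicValInt.of_nat, padicValNat.prime_pow]
  omega

theorem first_deriv_valuation (p : ℕ) (hp : p.Prime) (hodd : Odd p)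
    (a t : ℕ) (k : ℕ) (hk : 0 < k) (hdvd : p ^ (2 * a + 1) ∣ k)
    (hkbig : p ^ a * (p - 1) < k)
    (v : ℕ) (hv : v = min (padicValNat p k - (2 * a + 1)) t)
    (f : Polynomial ℤ)
    (hf : f = X ^ ((k + p ^ a * (p - 1)) * p ^ t) + X ^ ((k - p ^ a * (p - 1)) * p ^ t))
    (n : ℤ) (hn : IsCoprime n (p : ℤ)) :
    ((p : ℤ) ^ (2 * a + t + v + 1)) ∣ (derivative f).eval n ∧
    (v < t → padicValInt p ((derivative f).eval n) = 2 * a + t + v + 1) := by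
  haveI := Fact.mk hp
  set m : ℕ := p ^ a * (p - 1) with hm
  have hp2 : 2 ≤ p := hp.two_le
  have hp3 : 3 ≤ p := by
    rcases hodd with ⟨r, hr⟩; omega
  have hmpos : 0 < m := Nat.mul_pos (pow_pos hp.pos a) (by omega)
  -- basic coprimality facts
  have hpn : ¬ (p:ℤ) ∣ n := by
    intro hdvd'
    exact (Nat.prime_iff_prime_int.mp hp).not_isUnit (hn.isUnit_of_dvd' hdvd' dvd_rfl)
  have hn0 : n ≠ 0 := by rintro rfl; exact hpn (dvd_zero _)
  -- the exponents
  set A : ℕ := (k + m) * p ^ t with hA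
  set B : ℕ := (k - m) * p ^ t with hB
  have hptpos : 0 < p ^ t := pow_pos hp.pos t
  have hBpos : 0 < B := Nat.mul_pos (by omega) hptpos
  have hAB : A = B + 2 * m * p ^ t := by
    rw [hA, hB]
    have : k + m = (k - m) + 2 * m := by omega
    rw [this]; ring
  set X' : ℕ := 2 * m * p ^ t with hX'
  have heval : (derivative f).eval n = (A:ℤ) * n ^ (A - 1) + (B:ℤ) * n ^ (B - 1) := by
    subst hf; simp [derivative_X_pow]
  have hpowsplit : n ^ (A - 1) = n ^ (B - 1) * n ^ X' := by
    rw [← pow_add]; congr 1; omega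
  -- key factorization of the inner sum
  have hcast : ((k - m : ℕ) : ℤ) = (k:ℤ) - (m:ℤ) := by
    rw [Nat.cast_sub (le_of_lt hkbig)]
  have hinner : (A:ℤ) * n ^ X' + (B:ℤ)
      = (p:ℤ)^t * ((k:ℤ) * (n ^ X' + 1) + (m:ℤ) * (n ^ X' - 1)) := by
    rw [hA, hB]; push_cast [Nat.cast_sub (le_of_lt hkbig)]; ring
  have heval2 : (derivative f).eval n
      = n ^ (B - 1) * ((p:ℤ)^t * ((k:ℤ) * (n ^ X' + 1) + (m:ℤ) * (n ^ X' - 1))) := by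
    rw [heval, hpowsplit, ← hinner]; ring
  -- valuation of k
  set K : ℕ := padicValNat p k with hK
  have hKge : 2 * a + 1 ≤ K := by
    have := (padicValNat_dvd_iff_le (p := p) hk.ne').1 hdvd
    omega
  obtain ⟨k', hk'⟩ : ∃ k', k = p ^ K * k' := pow_padicValNat_dvd
  have hk'nd : ¬ p ∣ k' := by
    intro hdk'
    obtain ⟨d, hd⟩ := hdk'
    have : p ^ (K + 1) ∣ k := ⟨d, by rw [hk', hd]; ring⟩
    have := (padicValNat_dvd_iff_le (p := p) hk.ne').1 this
    omega
  -- LTE-style divisibility for n^X' - 1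
  have hfermat : (p:ℤ) ∣ n ^ (p - 1) - 1 := by
    have h1 := Int.ModEq.pow_card_sub_one_eq_one hp hn
    exact h1.symm.dvd
  have hc1 : (p:ℤ) ∣ n ^ (2 * (p - 1)) - 1 := by
    have h2 : n ^ (2 * (p - 1)) - 1 = (n ^ (p - 1) - 1) * (n ^ (p - 1) + 1) := by
      rw [two_mul, pow_add]; ring
    rw [h2]; exact hfermat.mul_right _
  have hX'eq : X' = p ^ (a + t) * (2 * (p - 1)) := by
    rw [hX', hm, pow_add]; ring
  have hlte : (p:ℤ) ^ (a + t + 1) ∣ n ^ X' - 1 := by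
    have := aux_pow_sub_one p hp (n ^ (2 * (p - 1))) hc1 (a + t)
    rwa [← pow_mul, mul_comm (2 * (p - 1)), ← hX'eq] at this
  obtain ⟨w, hw⟩ := hlte
  have hpX1 : (p:ℤ) ∣ n ^ X' - 1 :=
    dvd_trans (dvd_pow_self _ (Nat.succ_ne_zero (a + t))) ⟨w, hw⟩
  have hnd1 : ¬ (p:ℤ) ∣ n ^ X' + 1 := by
    intro hdd
    have h2 : (p:ℤ) ∣ 2 := by
      have : (2:ℤ) = (n ^ X' + 1) - (n ^ X' - 1) := by ring
      rw [this]; exact dvd_sub hdd hpX1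
    have : (p:ℕ) ∣ 2 := by exact_mod_cast h2
    have := Nat.le_of_dvd (by norm_num) this
    omega
  -- rewrite the inner sum
  set S : ℤ := (k:ℤ) * (n ^ X' + 1) + (m:ℤ) * (n ^ X' - 1) with hS
  have hSsplit : S = (p:ℤ)^K * ((k':ℤ) * (n ^ X' + 1)) + (p:ℤ)^(2*a+t+1) * (((p:ℤ) - 1) * w) := by
    rw [hS, hk', hw, hm]
    push_cast [Nat.cast_sub (by omega : 1 ≤ p)]
    ring
  -- Part 1: divisibility
  have hvt : v ≤ t := by omega
  have hvK : 2 * a + v + 1 ≤ K := by omega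
  have hdvdS : (p:ℤ) ^ (2 * a + v + 1) ∣ S := by
    rw [hSsplit]
    exact dvd_add (Dvd.dvd.mul_right (pow_dvd_pow _ hvK) _)
      (Dvd.dvd.mul_right (pow_dvd_pow _ (by omega)) _)
  have hdvdeval : ((p:ℤ) ^ (2 * a + t + v + 1)) ∣ (derivative f).eval n := by
    rw [heval2]
    obtain ⟨u, hu⟩ := hdvdS
    refine ⟨n ^ (B - 1) * u, ?_⟩
    rw [hu]
    rw [show 2 * a + t + v + 1 = t + (2 * a + v + 1) by omega, pow_add]
    ring
  refine ⟨hdvdeval, fun hvlt => ?_⟩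
  -- Part 2: exact valuation when v < t
  have hKeq : K = 2 * a + v + 1 := by omega
  set U : ℤ := (k':ℤ) * (n ^ X' + 1) + (p:ℤ)^(t - v) * (((p:ℤ) - 1) * w) with hU
  have hSU : S = (p:ℤ)^K * U := by
    rw [hSsplit, hU]
    rw [show 2*a+t+1 = K + (t - v) by omega, pow_add]
    ring
  have hndU : ¬ (p:ℤ) ∣ U := by
    intro hdd
    have hdv2 : (p:ℤ) ∣ (p:ℤ)^(t - v) * (((p:ℤ) - 1) * w) :=
      Dvd.dvd.mul_right (dvd_pow_self _ (by omega : t - v ≠ 0)) _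
    have : (p:ℤ) ∣ (k':ℤ) * (n ^ X' + 1) := by
      have : (k':ℤ) * (n ^ X' + 1) = U - (p:ℤ)^(t - v) * (((p:ℤ) - 1) * w) := by
        rw [hU]; ring
      rw [this]; exact dvd_sub hdd hdv2
    rcases (Nat.prime_iff_prime_int.mp hp).dvd_mul.1 this with h | h
    · exact hk'nd (by exact_mod_cast h)
    · exact hnd1 h
  have hndn : ¬ (p:ℤ) ∣ n ^ (B - 1) := fun h => hpn ((Nat.prime_iff_prime_int.mp hp).dvd_of_dvd_pow h)
  have hndW : ¬ (p:ℤ) ∣ n ^ (B - 1) * U := by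
    intro h
    rcases (Nat.prime_iff_prime_int.mp hp).dvd_mul.1 h with h | h
    exacts [hndn h, hndU h]
  have hfinal : (derivative f).eval n = (p:ℤ)^(t + K) * (n ^ (B - 1) * U) := by
    rw [heval2, hSU, pow_add]; ring
  rw [hfinal, aux_padicValInt p hp _ _ hndW]
  omega
end

section
/- With f(x) = x^((k+p^a(p-1))p^t) + x^((k-p^a(p-1))p^t), p an odd prime, p^(2a+1) | k, k > p^a(p-1), and v = min(v_p(k)-2a-1, t) = t (i.e., v_p(k) ≥ 2a + t + 1): for any integer n coprime to p, v_p(f''(n)) = 2a + 2t exactly. -/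
open Polynomial

theorem second_deriv_valuation (p : ℕ) (hp : p.Prime) (hodd : Odd p)
    (a t : ℕ) (k : ℕ) (hk : 0 < k) (hdvd : p ^ (2 * a + 1 + t) ∣ k)
    (hkbig : p ^ a * (p - 1) < k)
    (f : Polynomial ℤ)
    (hf : f = X ^ ((k + p ^ a * (p - 1)) * p ^ t) + X ^ ((k - p ^ a * (p - 1)) * p ^ t))
    (n : ℤ) (hn : IsCoprime n (p : ℤ)) :
    padicValInt p ((derivative (derivative f)).eval n) = 2 * a + 2 * t := by
  haveI := Fact.mk hp
  have hp3 : 3 ≤ p := by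
    rcases hodd with ⟨r, hr⟩
    have := hp.two_le
    omega
  set m : ℕ := p ^ a * (p - 1) with hm
  set A : ℕ := (k + m) * p ^ t with hA
  set B : ℕ := (k - m) * p ^ t with hB
  have hpt : 1 ≤ p ^ t := Nat.one_le_pow _ _ (by omega)
  have hpa : 1 ≤ p ^ a := Nat.one_le_pow _ _ (by omega)
  have hm2 : 2 ≤ m := by
    have : 1 * 2 ≤ p ^ a * (p - 1) := Nat.mul_le_mul hpa (by omega)
    omega
  have hmk : m ≤ k := hkbig.le
  have hA2 : 2 ≤ A := by
    have : (k + m) * 1 ≤ A := Nat.mul_le_mul_left _ hpt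
    omega
  have hB1 : 1 ≤ B := Nat.mul_pos (by omega) (by omega)
  have hABle : B ≤ A := Nat.mul_le_mul_right _ (by omega)
  have hAB : A - B = 2 * m * p ^ t := by
    have h1 : (k + m) - (k - m) = 2 * m := by omega
    rw [hA, hB, ← Nat.sub_mul, h1]
  obtain ⟨K, hK⟩ := hdvd
  -- integer abbreviations
  set P : ℤ := (p : ℤ) with hPdef
  set α : ℤ := P ^ (a + 1 + t) * (K : ℤ) + (P - 1) with hα
  set β : ℤ := P ^ (a + 1 + t) * (K : ℤ) - (P - 1) with hβ
  have hmZ : (m : ℤ) = P ^ a * (P - 1) := by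
    have h1 : ((p - 1 : ℕ) : ℤ) = P - 1 := by omega
    rw [hm]
    push_cast [h1]
    ring
  have hkZ : (k : ℤ) = P ^ (2 * a + 1 + t) * (K : ℤ) := by
    rw [hK]; push_cast; ring
  have hAZ : (A : ℤ) = P ^ (a + t) * α := by
    rw [hA]
    push_cast [hkZ, hmZ, hα]
    ring
  have hBZ : (B : ℤ) = P ^ (a + t) * β := by
    rw [hB]
    push_cast [Nat.cast_sub hmk, hkZ, hmZ, hβ]
    ring
  -- Euler's theorem: n^(A-B) ≡ 1 mod p^(a+t+1)
  have heuler : P ^ (a + t + 1) ∣ n ^ (A - B) - 1 := by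
    have hcop : Nat.Coprime n.natAbs (p ^ (a + t + 1)) := by
      have h0 : Int.gcd n p = 1 := Int.isCoprime_iff_gcd_eq_one.mp hn
      have : Nat.Coprime n.natAbs p := by
        unfold Int.gcd at h0; simpa using h0
      exact this.pow_right _
    set q := p ^ (a + t + 1) with hq
    set u : (ZMod q)ˣ := ZMod.unitOfCoprime n.natAbs hcop with hu
    have htot : Nat.totient q = p ^ (a + t) * (p - 1) := by
      rw [hq, Nat.totient_prime_pow hp (by omega), Nat.add_sub_cancel]
    have hEdvd : p ^ (a + t) * (p - 1) ∣ A - B := by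
      rw [hAB]
      exact ⟨2, by rw [hm]; ring⟩
    have hEeven : Even (A - B) := by
      rw [hAB]; exact ⟨m * p ^ t, by ring⟩
    have hupow : u ^ (A - B) = 1 := by
      obtain ⟨c, hc⟩ := hEdvd
      rw [hc, ← htot, pow_mul, ZMod.pow_totient, one_pow]
    have hnat : n ^ (A - B) = ((n.natAbs : ℕ) : ℤ) ^ (A - B) := by
      rw [← Int.abs_eq_natAbs]
      exact (hEeven.pow_abs n).symm
    have hz : ((n ^ (A - B) - 1 : ℤ) : ZMod q) = 0 := by
      rw [hnat]
      simp only [Int.cast_sub, Int.cast_pow, Int.cast_one, Int.cast_natCast]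
      have hcu : ((n.natAbs : ZMod q)) = (u : ZMod q) :=
        (ZMod.coe_unitOfCoprime _ _).symm
      rw [hcu, ← Units.val_pow_eq_pow_val, hupow, Units.val_one, sub_self]
    have := (ZMod.intCast_zmod_eq_zero_iff_dvd _ q).mp hz
    rwa [hq, Nat.cast_pow] at this
  -- the key quantity G
  set G : ℤ := (A : ℤ) * ((A : ℤ) - 1) * n ^ (A - B) + (B : ℤ) * ((B : ℤ) - 1) with hG
  have hGid : G = P ^ (2 * a + 2 * t) * (α ^ 2 + β ^ 2) - ((A : ℤ) + (B : ℤ))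
      + (A : ℤ) * ((A : ℤ) - 1) * (n ^ (A - B) - 1) := by
    rw [hG, hAZ, hBZ]
    ring
  have hsumdvd : P ^ (2 * a + 2 * t + 1) ∣ (A : ℤ) + (B : ℤ) := by
    refine ⟨2 * (K : ℤ), ?_⟩
    rw [hAZ, hBZ, hα, hβ]
    ring
  have hterm3 : P ^ (2 * a + 2 * t + 1) ∣ (A : ℤ) * ((A : ℤ) - 1) * (n ^ (A - B) - 1) := by
    have h1 : P ^ (a + t) ∣ (A : ℤ) * ((A : ℤ) - 1) := ⟨α * ((A : ℤ) - 1), by rw [hAZ]; ring⟩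
    have := mul_dvd_mul h1 heuler
    rwa [← pow_add, show a + t + (a + t + 1) = 2 * a + 2 * t + 1 from by ring] at this
  have hGdvd : P ^ (2 * a + 2 * t) ∣ G := by
    rw [hGid]
    have hP : P ^ (2 * a + 2 * t) ∣ P ^ (2 * a + 2 * t + 1) := pow_dvd_pow _ (by omega)
    exact dvd_add (dvd_sub (dvd_mul_right _ _) (hP.trans hsumdvd)) (hP.trans hterm3)
  have hP0 : P ≠ 0 := by
    rw [hPdef]
    exact_mod_cast hp.pos.ne'
  have hunit : ¬ P ∣ (α ^ 2 + β ^ 2) := by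
    intro h
    have h2 : P ∣ 2 := by
      have hid2 : (2 : ℤ) = (α ^ 2 + β ^ 2) - P * (2 * P ^ (2 * a + 1 + 2 * t) * (K:ℤ) ^ 2 + 2 * P - 4) := by
        rw [hα, hβ]
        ring
      rw [hid2]
      exact dvd_sub h (dvd_mul_right _ _)
    have hle : (p : ℤ) ≤ 2 := Int.le_of_dvd (by norm_num) h2
    omega
  have hGnot : ¬ P ^ (2 * a + 2 * t + 1) ∣ G := by
    intro h
    have h1 : P ^ (2 * a + 2 * t + 1) ∣ P ^ (2 * a + 2 * t) * (α ^ 2 + β ^ 2) := by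
      have : P ^ (2 * a + 2 * t) * (α ^ 2 + β ^ 2)
          = G + ((A : ℤ) + (B : ℤ)) - (A : ℤ) * ((A : ℤ) - 1) * (n ^ (A - B) - 1) := by
        rw [hGid]; ring
      rw [this]
      exact dvd_sub (dvd_add h hsumdvd) hterm3
    rw [pow_succ, mul_dvd_mul_iff_left (pow_ne_zero _ hP0)] at h1
    exact hunit h1
  -- evaluate the second derivative
  set E : ℤ := (derivative (derivative f)).eval n with hEdef
  have hE : E = (A : ℤ) * ((A : ℤ) - 1) * n ^ (A - 2) + (B : ℤ) * ((B : ℤ) - 1) * n ^ (B - 2) := by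
    rw [hEdef, hf]
    simp [derivative_X_pow]
    have h1 : ((A - 1 : ℕ) : ℤ) = (A : ℤ) - 1 := by omega
    have h2 : ((B - 1 : ℕ) : ℤ) = (B : ℤ) - 1 := by omega
    have h3 : A - 1 - 1 = A - 2 := by omega
    have h4 : B - 1 - 1 = B - 2 := by omega
    rw [h1, h2, h3, h4]
    ring
  -- relate E and G
  have hid : n ^ 2 * E = n ^ B * G := by
    have e1 : n ^ (A - 2) * n ^ 2 = n ^ A := by
      rw [← pow_add]; congr 1; omega
    have e2 : n ^ (A - B) * n ^ B = n ^ A := by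
      rw [← pow_add]; congr 1; omega
    rw [hE, hG]
    rcases Nat.lt_or_ge B 2 with hBlt | hBge
    · have hBeq : B = 1 := by omega
      have hb0 : (B : ℤ) * ((B : ℤ) - 1) = 0 := by rw [hBeq]; norm_num
      linear_combination ((A:ℤ) * ((A:ℤ) - 1)) * e1 - ((A:ℤ) * ((A:ℤ) - 1)) * e2
        + (n ^ 2 * n ^ (B - 2) - n ^ B) * hb0
    · have e3 : n ^ (B - 2) * n ^ 2 = n ^ B := by
        rw [← pow_add]; congr 1; omega
      linear_combination ((A:ℤ) * ((A:ℤ) - 1)) * e1 - ((A:ℤ) * ((A:ℤ) - 1)) * e2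
        + ((B:ℤ) * ((B:ℤ) - 1)) * e3
  have hiff : ∀ c : ℕ, (P ^ c ∣ E ↔ P ^ c ∣ G) := by
    intro c
    have hc1 : IsCoprime (P ^ c) (n ^ 2) := (hn.symm.pow : IsCoprime (P ^ c) (n ^ 2))
    have hc2 : IsCoprime (P ^ c) (n ^ B) := (hn.symm.pow : IsCoprime (P ^ c) (n ^ B))
    constructor
    · intro h
      have : P ^ c ∣ n ^ B * G := by rw [← hid]; exact Dvd.dvd.mul_left h _
      exact hc2.dvd_of_dvd_mul_left this
    · intro h
      have : P ^ c ∣ n ^ 2 * E := by rw [hid]; exact Dvd.dvd.mul_left h _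
      exact hc1.dvd_of_dvd_mul_left this
  have hEdvd : P ^ (2 * a + 2 * t) ∣ E := (hiff _).mpr hGdvd
  have hEnot : ¬ P ^ (2 * a + 2 * t + 1) ∣ E := fun h => hGnot ((hiff _).mp h)
  have hlow := (padicValInt_dvd_iff (2 * a + 2 * t) E).mp hEdvd
  have hhigh := (padicValInt_dvd_iff (2 * a + 2 * t + 1) E).not.mp hEnot
  push_neg at hhigh
  rcases hlow with h0 | hle
  · exact absurd (h0 ▸ (dvd_zero _)) hEnot
  · have := hhigh.2
    omega
end

section
/- Let f(x) = x^((k+p^a(p-1))p^t) + x^((k-p^a(p-1))p^t) with p odd prime, p^(2a+1) | k, k > p^a(p-1), v = min(v_p(k)-2a-1, t). Then for any nonnegative integer j, positive integer m ≥ j (with m ≥ 1), integer s coprime to p, and any integer x, f(s + p^m x) ≡ f(s) + f'(s) p^m x (mod p^(2a+t+v+2m)). If moreover v < t, the congruence holds mod p^(2a+t+v+2m+1). -/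
open Polynomial Finset

/-- Binomial step: `(w + p^c y)^p ≡ w^p + p w^{p-1} (p^c y)` mod `p^(2c+1)`. -/
lemma aux_pow_p (p : ℕ) (hp : p.Prime) (hp3 : 3 ≤ p) (c : ℕ) (hc : 1 ≤ c) (w y : ℤ) :
    ∃ z : ℤ, (w + (p:ℤ)^c * y)^p
      = w^p + (p:ℤ) * w^(p-1) * ((p:ℤ)^c * y) + (p:ℤ)^(2*c+1) * z := by
  set d : ℤ := (p:ℤ)^c * y with hd
  have hsum : (p:ℤ)^(2*c+1) ∣ ∑ i ∈ range (p-1), w^i * d^(p-i) * (p.choose i : ℤ) := by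
    apply Finset.dvd_sum
    intro i hi
    have hilt : i < p - 1 := Finset.mem_range.mp hi
    have hd2 : d^(p-i) = (p:ℤ)^(c*(p-i)) * y^(p-i) := by
      rw [hd, mul_pow, ← pow_mul]
    by_cases hi0 : i = 0
    · subst hi0
      simp only [Nat.sub_zero, pow_zero, one_mul, Nat.choose_zero_right, Nat.cast_one, mul_one]
      have hle : 2*c+1 ≤ c*p := by
        have : c*3 ≤ c*p := Nat.mul_le_mul_left c hp3
        omega
      rw [hd, mul_pow, ← pow_mul]
      exact (pow_dvd_pow _ hle).mul_right _
    · have hpc : (p:ℤ) ∣ (p.choose i : ℤ) :=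
        Int.natCast_dvd_natCast.mpr (Nat.Prime.dvd_choose_self hp hi0 (by omega))
      have hle : 2*c ≤ c*(p-i) := by
        have : c*2 ≤ c*(p-i) := Nat.mul_le_mul_left c (by omega)
        omega
      have h1 : (p:ℤ)^(2*c) ∣ d^(p-i) := by
        rw [hd2]; exact (pow_dvd_pow _ hle).mul_right _
      have h2 : (p:ℤ)^(2*c+1) ∣ d^(p-i) * (p.choose i : ℤ) := by
        rw [pow_succ]; exact mul_dvd_mul h1 hpc
      calc (p:ℤ)^(2*c+1) ∣ d^(p-i) * (p.choose i : ℤ) := h2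
        _ ∣ w^i * d^(p-i) * (p.choose i : ℤ) := by
            rw [mul_assoc]; exact Dvd.intro_left _ rfl
  have hexp : (w + d)^p - w^p - (p:ℤ) * w^(p-1) * d
      = ∑ i ∈ range (p-1), w^i * d^(p-i) * (p.choose i : ℤ) := by
    rw [add_pow]
    have h1 : p + 1 = (p - 1) + 1 + 1 := by omega
    rw [h1, Finset.sum_range_succ, Finset.sum_range_succ]
    have h2 : p - 1 + 1 = p := by omega
    rw [h2]
    have hch : (p.choose (p-1) : ℤ) = (p : ℤ) := by
      rw [Nat.choose_symm (show 1 ≤ p by omega), Nat.choose_one_right]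
    have hpp : p - (p - 1) = 1 := by omega
    rw [hch, hpp, Nat.sub_self, Nat.choose_self, pow_zero, pow_one]
    push_cast
    ring
  obtain ⟨z, hz⟩ : (p:ℤ)^(2*c+1) ∣ (w + d)^p - w^p - (p:ℤ) * w^(p-1) * d := hexp ▸ hsum
  exact ⟨z, by linarith [hz]⟩

/-- Iterated: `(s + p^m x)^(p^e) ≡ s^(p^e) + p^e s^(p^e-1) (p^m x)` mod `p^(e+2m)`. -/
lemma aux_pow_pe (p : ℕ) (hp : p.Prime) (hp3 : 3 ≤ p) (m : ℕ) (hm : 1 ≤ m) (s x : ℤ) (e : ℕ) :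
    ∃ z : ℤ, (s + (p:ℤ)^m * x)^(p^e)
      = s^(p^e) + (p:ℤ)^e * s^(p^e - 1) * ((p:ℤ)^m * x) + (p:ℤ)^(e + 2*m) * z := by
  induction e with
  | zero => exact ⟨0, by simp⟩
  | succ e ih =>
    obtain ⟨z, hz⟩ := ih
    obtain ⟨z₂, hz₂⟩ := aux_pow_p p hp hp3 (e + m) (by omega) (s^(p^e))
      (s^(p^e - 1) * x + (p:ℤ)^m * z)
    refine ⟨(s^(p^e))^(p-1) * z + (p:ℤ)^e * z₂, ?_⟩
    have hstep : (s + (p:ℤ)^m * x)^(p^(e+1)) = ((s + (p:ℤ)^m * x)^(p^e))^p := by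
      rw [pow_succ, pow_mul]
    have harg : (s + (p:ℤ)^m * x)^(p^e)
        = s^(p^e) + (p:ℤ)^(e+m) * (s^(p^e - 1) * x + (p:ℤ)^m * z) := by
      rw [hz]; ring
    rw [hstep, harg, hz₂]
    have h1 : (s^(p^e))^p = s^(p^(e+1)) := by rw [← pow_mul, ← pow_succ]
    have h2 : (s^(p^e))^(p-1) * s^(p^e - 1) = s^(p^(e+1) - 1) := by
      rw [← pow_mul, ← pow_add]
      congr 1
      obtain ⟨q, hq⟩ : ∃ q, p = q + 1 := ⟨p - 1, by omega⟩
      subst hq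
      have hX : 1 ≤ (q+1)^e := Nat.one_le_pow _ _ (by omega)
      have h3 : (q+1)^e * (q+1) = (q+1)^e * q + (q+1)^e := by ring
      have h4 : (q+1)^(e+1) = (q+1)^e * (q+1) := pow_succ _ _
      simp only [Nat.add_sub_cancel]
      omega
    rw [h1, ← h2]
    ring

/-- Lifting: if `p ∣ w - 1` then `p^(e+1) ∣ w^(p^e) - 1`. -/
lemma aux_lift_one (p : ℕ) (hp : p.Prime) (hp3 : 3 ≤ p) (w : ℤ) (h : (p:ℤ) ∣ w - 1) (e : ℕ) :
    (p:ℤ)^(e+1) ∣ w^(p^e) - 1 := by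
  induction e with
  | zero => simpa using h
  | succ e ih =>
    obtain ⟨r, hr⟩ := ih
    obtain ⟨z₂, hz₂⟩ := aux_pow_p p hp hp3 (e+1) (by omega) 1 r
    have hw : w^(p^(e+1)) = (w^(p^e))^p := by rw [pow_succ, pow_mul]
    have hw2 : w^(p^e) = 1 + (p:ℤ)^(e+1) * r := by linarith [hr]
    rw [hw, hw2, hz₂]
    refine ⟨r + (p:ℤ)^(e+1) * z₂, ?_⟩
    simp only [one_pow]
    ring

theorem taylor_congruence (p : ℕ) (hp : p.Prime) (hodd : Odd p)
    (a t : ℕ) (k : ℕ) (hk : 0 < k) (hdvd : p ^ (2 * a + 1) ∣ k)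
    (hkbig : p ^ a * (p - 1) < k)
    (v : ℕ) (hv : v = min (padicValNat p k - (2 * a + 1)) t)
    (f : Polynomial ℤ)
    (hf : f = X ^ ((k + p ^ a * (p - 1)) * p ^ t) + X ^ ((k - p ^ a * (p - 1)) * p ^ t))
    (s : ℤ) (hs : IsCoprime s (p : ℤ)) (m : ℕ) (hm : 0 < m) (x : ℤ) :
    (f.eval (s + (p : ℤ) ^ m * x) ≡
      f.eval s + (derivative f).eval s * ((p : ℤ) ^ m * x)
      [ZMOD (p : ℤ) ^ (2 * a + t + v + 2 * m)]) ∧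
    (v < t → f.eval (s + (p : ℤ) ^ m * x) ≡
      f.eval s + (derivative f).eval s * ((p : ℤ) ^ m * x)
      [ZMOD (p : ℤ) ^ (2 * a + t + v + 2 * m + 1)]) := by
  have hp3 : 3 ≤ p := by
    obtain ⟨w, hw⟩ := hodd
    have := hp.two_le
    omega
  haveI : Fact p.Prime := ⟨hp⟩
  obtain ⟨k', hk'⟩ := hdvd
  have hk'pos : 0 < k' := by
    rcases Nat.eq_zero_or_pos k' with h | h
    · rw [h, mul_zero] at hk'; omega
    · exact h
  have hvt : v ≤ t := hv ▸ min_le_right _ _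
  have hvle : v ≤ padicValNat p k - (2*a+1) := hv ▸ min_le_left _ _
  have hle1 : 2*a+1 ≤ padicValNat p k := (padicValNat_dvd_iff_le hk.ne').mp ⟨k', hk'⟩
  have hvk : p ^ v ∣ k' := by
    have hle2 : 2*a+1+v ≤ padicValNat p k := by omega
    have hdvd2 : p^(2*a+1+v) ∣ k := (pow_dvd_pow p hle2).trans pow_padicValNat_dvd
    rw [hk', pow_add] at hdvd2
    exact (Nat.mul_dvd_mul_iff_left (pow_pos hp.pos (2*a+1))).mp hdvd2
  set K := p^(a+1) * k' with hK
  have hkK : k = p^a * K := by rw [hk', hK]; ring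
  have hq : p - 1 < K := by
    rw [hkK] at hkbig
    exact Nat.lt_of_mul_lt_mul_left hkbig
  set c1 := K + (p-1) with hc1
  set c2 := K - (p-1) with hc2
  have hc2K : c2 + (p-1) = K := by omega
  have hc1pos : 1 ≤ c1 := by omega
  have hc2pos : 1 ≤ c2 := by omega
  have hn1 : (k + p^a*(p-1)) * p^t = p^(a+t) * c1 := by
    rw [hkK, hc1, pow_add]; ring
  have hn2 : (k - p^a*(p-1)) * p^t = p^(a+t) * c2 := by
    have hsub : k - p^a*(p-1) = p^a * c2 := by
      have h5 : p^a * c2 + p^a * (p-1) = k := by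
        rw [hkK, ← Nat.mul_add, hc2K]
      omega
    rw [hsub, pow_add]; ring
  have hP1 : 1 ≤ p^(a+t) := Nat.one_le_pow _ _ hp.pos
  -- the key expansion of (s + p^m x)^(p^(a+t))
  obtain ⟨z, hz⟩ := aux_pow_pe p hp hp3 m hm s x (a+t)
  obtain ⟨B, w, hBw, hBdvd, hu⟩ :
      ∃ B w : ℤ, B = (p:ℤ)^(a+t) * s^(p^(a+t) - 1) * ((p:ℤ)^m * x) + (p:ℤ)^(a+t+2*m) * w
        ∧ (p:ℤ)^(a+t+m) ∣ B
        ∧ (s + (p:ℤ)^m * x)^(p^(a+t)) = s^(p^(a+t)) + B :=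
    ⟨_, z, rfl, ⟨s^(p^(a+t)-1)*x + (p:ℤ)^m*z, by ring⟩, by rw [hz]; ring⟩
  set A := s ^ (p ^ (a+t)) with hA
  obtain ⟨K1, hK1⟩ := Polynomial.binomExpansion (X ^ c1 : Polynomial ℤ) A B
  obtain ⟨K2, hK2⟩ := Polynomial.binomExpansion (X ^ c2 : Polynomial ℤ) A B
  simp only [eval_pow, eval_X, derivative_X_pow, eval_mul, eval_C] at hK1 hK2
  have heval1 : f.eval (s + (p:ℤ)^m * x) = (A+B)^c1 + (A+B)^c2 := by
    rw [hf]
    simp only [eval_add, eval_pow, eval_X]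
    rw [hn1, hn2, pow_mul, pow_mul, hu]
  have heval2 : f.eval s = A^c1 + A^c2 := by
    rw [hf]
    simp only [eval_add, eval_pow, eval_X]
    rw [hn1, hn2, pow_mul, pow_mul, hA]
  have hder : (derivative f).eval s
      = (((k + p^a*(p-1)) * p^t : ℕ) : ℤ) * s^((k + p^a*(p-1)) * p^t - 1)
        + (((k - p^a*(p-1)) * p^t : ℕ) : ℤ) * s^((k - p^a*(p-1)) * p^t - 1) := by
    rw [hf]
    simp only [derivative_add, derivative_X_pow, eval_add, eval_mul, eval_C, eval_pow, eval_X]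
  have hexp1 : p^(a+t)*(c1-1) + (p^(a+t)-1) = (k + p^a*(p-1))*p^t - 1 := by
    rw [hn1]
    obtain ⟨e1, he1⟩ : ∃ e1, c1 = e1 + 1 := ⟨c1 - 1, by omega⟩
    rw [he1]
    have hh : p^(a+t)*(e1+1) = p^(a+t)*e1 + p^(a+t) := by ring
    simp only [Nat.add_sub_cancel]
    omega
  have hexp2 : p^(a+t)*(c2-1) + (p^(a+t)-1) = (k - p^a*(p-1))*p^t - 1 := by
    rw [hn2]
    obtain ⟨e2, he2⟩ : ∃ e2, c2 = e2 + 1 := ⟨c2 - 1, by omega⟩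
    rw [he2]
    have hh : p^(a+t)*(e2+1) = p^(a+t)*e2 + p^(a+t) := by ring
    simp only [Nat.add_sub_cancel]
    omega
  have hpow1 : A^(c1-1) * s^(p^(a+t)-1) = s^((k + p^a*(p-1))*p^t - 1) := by
    rw [hA, ← pow_mul, ← pow_add, hexp1]
  have hpow2 : A^(c2-1) * s^(p^(a+t)-1) = s^((k - p^a*(p-1))*p^t - 1) := by
    rw [hA, ← pow_mul, ← pow_add, hexp2]
  have hcast1 : (((k + p^a*(p-1)) * p^t : ℕ) : ℤ) = (p:ℤ)^(a+t) * (c1:ℤ) := by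
    rw [hn1]; push_cast; ring
  have hcast2 : (((k - p^a*(p-1)) * p^t : ℕ) : ℤ) = (p:ℤ)^(a+t) * (c2:ℤ) := by
    rw [hn2]; push_cast; ring
  have hlin : (derivative f).eval s * ((p:ℤ)^m * x)
      = ((c1:ℤ)*A^(c1-1) + (c2:ℤ)*A^(c2-1)) * ((p:ℤ)^(a+t) * s^(p^(a+t) - 1) * ((p:ℤ)^m * x)) := by
    rw [hder, hcast1, hcast2, ← hpow1, ← hpow2]; ring
  have hDelta : f.eval (s + (p:ℤ)^m*x) - (f.eval s + (derivative f).eval s * ((p:ℤ)^m*x))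
      = ((c1:ℤ)*A^(c1-1) + (c2:ℤ)*A^(c2-1)) * ((p:ℤ)^(a+t+2*m) * w) + (K1+K2) * B^2 := by
    rw [heval1, hK1, hK2, heval2, hlin, hBw]; ring
  -- divisibility of the coefficient sum
  have hC : (p:ℤ)^(a+v+1) ∣ (c1:ℤ)*A^(c1-1) + (c2:ℤ)*A^(c2-1) := by
    have h12 : c1 - 1 = (c2 - 1) + 2*(p-1) := by omega
    have hfer : (p:ℤ) ∣ s^(2*(p-1)) - 1 := by
      have h1 : s^(p-1) ≡ 1 [ZMOD (p:ℤ)] := Int.ModEq.pow_card_sub_one_eq_one hp hs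
      have h2 := (h1.mul h1).dvd
      have h3 : s^(2*(p-1)) - 1 = -(1*1 - s^(p-1)*s^(p-1)) := by
        rw [two_mul, pow_add]; ring
      rw [h3]
      exact dvd_neg.mpr h2
    have hlift := aux_lift_one p hp hp3 _ hfer (a+t)
    have hA2 : A^(2*(p-1)) = (s^(2*(p-1)))^(p^(a+t)) := by
      rw [hA, ← pow_mul, ← pow_mul, Nat.mul_comm]
    have h3 : (p:ℤ)^(a+v+1) ∣ A^(2*(p-1)) - 1 := by
      rw [hA2]
      exact (pow_dvd_pow _ (by omega : a+v+1 ≤ a+t+1)).trans hlift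
    have h4 : (p:ℤ)^(a+v+1) ∣ ((c1:ℤ) + (c2:ℤ)) := by
      have hn : c1 + c2 = 2*K := by omega
      have hd5 : p^(a+v+1) ∣ c1 + c2 := by
        rw [hn]
        refine Dvd.dvd.mul_left ?_ 2
        rw [hK, show a+v+1 = (a+1)+v by omega, pow_add]
        exact mul_dvd_mul_left _ hvk
      exact_mod_cast Int.natCast_dvd_natCast.mpr hd5
    have hsum : (p:ℤ)^(a+v+1) ∣ (c1:ℤ)*A^(2*(p-1)) + (c2:ℤ) := by
      have he : (c1:ℤ)*A^(2*(p-1)) + (c2:ℤ)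
          = (c1:ℤ)*(A^(2*(p-1)) - 1) + ((c1:ℤ)+(c2:ℤ)) := by ring
      rw [he]
      exact dvd_add (h3.mul_left _) h4
    have hfact : (c1:ℤ)*A^(c1-1) + (c2:ℤ)*A^(c2-1)
        = A^(c2-1) * ((c1:ℤ)*A^(2*(p-1)) + (c2:ℤ)) := by
      rw [h12, pow_add]; ring
    rw [hfact]
    exact hsum.mul_left _
  have hB2 : (p:ℤ)^(2*a+2*t+2*m) ∣ B^2 := by
    rw [show 2*a+2*t+2*m = (a+t+m)+(a+t+m) by ring, pow_add, sq]
    exact mul_dvd_mul hBdvd hBdvd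
  have hall : ∀ T : ℕ, T ≤ 2*a+t+v+2*m+1 → T ≤ 2*a+2*t+2*m →
      f.eval (s + (p:ℤ)^m*x) ≡ f.eval s + (derivative f).eval s * ((p:ℤ)^m*x)
        [ZMOD (p:ℤ)^T] := by
    intro T h1 h2
    rw [Int.modEq_iff_dvd]
    have hd1 : (p:ℤ)^T ∣ f.eval (s + (p:ℤ)^m*x)
        - (f.eval s + (derivative f).eval s * ((p:ℤ)^m*x)) := by
      rw [hDelta]
      refine dvd_add ?_ ?_
      · refine (pow_dvd_pow _ h1).trans ?_
        have hmm := mul_dvd_mul hC (dvd_mul_right ((p:ℤ)^(a+t+2*m)) w)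
        rwa [show (2*a+t+v+2*m+1 : ℕ) = (a+v+1)+(a+t+2*m) by ring, pow_add]
      · exact (pow_dvd_pow _ h2).trans (hB2.mul_left _)
    have := dvd_neg.mpr hd1
    rwa [neg_sub] at this
  constructor
  · exact hall _ (by omega) (by omega)
  · intro hvt'
    exact hall _ (by omega) (by omega)
end

section
/- Let f(x) = x^((k+p^a(p-1))p^t) + x^((k-p^a(p-1))p^t) with p odd prime, p^(2a+1+t) | k, k > p^a(p-1) (so v = t). Then for each integer s with 0 ≤ s ≤ a, there exist exactly p^(a-s)(p-1) positive integers u ≤ p^(a+1) coprime to p with v_p(f'(u)) ≥ 2a + 2t + s + 1. -/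
open Polynomial Finset

namespace CHV

variable {p : ℕ}

lemma geom_cong (x y : ℤ) (n : ℕ) (h : (p:ℤ) ∣ x - y) :
    (p:ℤ) ∣ (∑ i ∈ range n, x ^ i * y ^ (n - 1 - i)) - n * y ^ (n - 1) := by
  have hn : (n : ℤ) * y ^ (n - 1) = ∑ _i ∈ range n, y ^ (n - 1) := by
    rw [Finset.sum_const, card_range, nsmul_eq_mul]
  rw [hn, ← Finset.sum_sub_distrib]
  apply Finset.dvd_sum
  intro i hi
  have hi' : i < n := mem_range.mp hi
  have hexp : i + (n - 1 - i) = n - 1 := by omega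
  have : x ^ i * y ^ (n-1-i) - y ^ (n-1) = (x ^ i - y ^ i) * y ^ (n-1-i) := by
    rw [sub_mul, ← pow_add, hexp]
  rw [this]
  exact dvd_mul_of_dvd_left (dvd_trans h (sub_dvd_pow_sub_pow x y i)) _

lemma step_dvd (hp : p.Prime) {x y : ℤ} {c : ℕ} (hc : 1 ≤ c)
    (h : (p:ℤ)^c ∣ x - y) : (p:ℤ)^(c+1) ∣ x ^ p - y ^ p := by
  have h1 : (p:ℤ) ∣ x - y := dvd_trans (dvd_pow_self _ (by omega : c ≠ 0)) h
  have hS : (p:ℤ) ∣ ∑ i ∈ range p, x ^ i * y ^ (p - 1 - i) := by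
    have h2 := geom_cong x y p h1
    have h3 : (p:ℤ) ∣ (p:ℤ) * y ^ (p-1) := dvd_mul_right _ _
    have := dvd_add h2 h3
    simpa using this
  have key := geom_sum₂_mul x y p
  have hpow : (p:ℤ)^(c+1) = p * p^c := by ring
  rw [hpow, ← key]
  exact mul_dvd_mul hS h

lemma iter_dvd (hp : p.Prime) {x y : ℤ} {c : ℕ} (hc : 1 ≤ c)
    (h : (p:ℤ)^c ∣ x - y) (j : ℕ) : (p:ℤ)^(c+j) ∣ x ^ (p^j) - y ^ (p^j) := by
  induction j with
  | zero => simpa using h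
  | succ n ih =>
      have h2 : (p:ℤ)^(c+n+1) ∣ (x^(p^n))^p - (y^(p^n))^p := step_dvd hp (by omega) ih
      rw [← pow_mul, ← pow_mul, ← pow_succ] at h2
      have he : c + (n+1) = c + n + 1 := by omega
      rw [he]
      exact h2

lemma exact_step (hp : p.Prime) (hodd : Odd p) {w z : ℤ} {c : ℕ} (hc : 1 ≤ c)
    (hw : w - 1 = (p:ℤ)^c * z) :
    ∃ z', w ^ p - 1 = (p:ℤ)^(c+1) * z' ∧ (p:ℤ) ∣ z' - z := by
  have h1 : (p:ℤ) ∣ w - 1 := hw ▸ dvd_mul_of_dvd_left (dvd_pow_self _ (by omega : c ≠ 0)) _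
  -- S - p = (∑ G_i) * (w - 1)
  have hsum : (∑ i ∈ range p, w ^ i) - (p:ℤ) =
      (∑ i ∈ range p, ∑ j ∈ range i, w ^ j) * (w - 1) := by
    rw [Finset.sum_mul]
    have : (∑ i ∈ range p, w ^ i) - (p:ℤ) = ∑ i ∈ range p, (w ^ i - 1) := by
      rw [Finset.sum_sub_distrib, Finset.sum_const, card_range]
      push_cast; ring
    rw [this]
    exact Finset.sum_congr rfl fun i _ => (geom_sum_mul w i).symm
  -- p ∣ ∑ G_i
  have hG : (p:ℤ) ∣ ∑ i ∈ range p, ∑ j ∈ range i, w ^ j := by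
    have hterm : (p:ℤ) ∣ ∑ i ∈ range p, ((∑ j ∈ range i, w ^ j) - i) := by
      apply Finset.dvd_sum
      intro i _
      have := geom_cong (p := p) w 1 i h1
      simpa using this
    have hintsum : (p:ℤ) ∣ ∑ i ∈ range p, (i : ℤ) := by
      have h2 := Finset.sum_range_id_mul_two p
      have h3 : p ∣ (∑ i ∈ range p, i) * 2 := by rw [h2]; exact Dvd.intro _ rfl
      rcases (Nat.Prime.dvd_mul hp).mp h3 with h4 | h4
      · have : ((∑ i ∈ range p, i : ℕ) : ℤ) = ∑ i ∈ range p, (i:ℤ) := by push_cast; rfl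
        exact this ▸ Int.natCast_dvd_natCast.mpr h4
      · exfalso
        have := Nat.le_of_dvd (by norm_num) h4
        have := hp.two_le
        interval_cases p
        · exact absurd hodd (by decide)
    have : (∑ i ∈ range p, ∑ j ∈ range i, w ^ j)
        = (∑ i ∈ range p, ((∑ j ∈ range i, w ^ j) - i)) + ∑ i ∈ range p, (i:ℤ) := by
      rw [← Finset.sum_add_distrib]
      exact Finset.sum_congr rfl fun i _ => by ring
    rw [this]
    exact dvd_add hterm hintsum
  obtain ⟨g, hg⟩ := hG
  refine ⟨z + p^c * g * z^2, ?_, ?_⟩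
  · have key := geom_sum_mul w p
    have hS : (∑ i ∈ range p, w ^ i) = p + (p * g) * ((p:ℤ)^c * z) := by
      have h5 := hsum
      rw [hg, hw] at h5
      linarith
    calc w ^ p - 1 = (∑ i ∈ range p, w ^ i) * (w - 1) := key.symm
      _ = ((p:ℤ) + (p * g) * ((p:ℤ)^c * z)) * ((p:ℤ)^c * z) := by rw [hS, hw]
      _ = (p:ℤ)^(c+1) * (z + p^c * g * z^2) := by ring
  · have : z + (p:ℤ)^c * g * z^2 - z = p^c * (g * z^2) := by ring
    rw [this]
    exact dvd_mul_of_dvd_left (dvd_pow_self _ (by omega : c ≠ 0)) _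

lemma exact_iter (hp : p.Prime) (hodd : Odd p) {w z : ℤ} {c : ℕ} (hc : 1 ≤ c)
    (hw : w - 1 = (p:ℤ)^c * z) (j : ℕ) :
    ∃ z', w ^ (p^j) - 1 = (p:ℤ)^(c+j) * z' ∧ (p:ℤ) ∣ z' - z := by
  induction j with
  | zero => exact ⟨z, by simpa using hw, by simp⟩
  | succ n ih =>
    obtain ⟨z', h1, h2⟩ := ih
    obtain ⟨z'', h3, h4⟩ := exact_step hp hodd (c := c+n) (by omega) h1
    refine ⟨z'', ?_, ?_⟩
    · have : w ^ (p^(n+1)) = (w ^ (p^n)) ^ p := by rw [← pow_mul, pow_succ]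
      rw [this, h3]
      ring_nf
    · have := dvd_add h4 h2
      simpa using this

lemma exact_val (hp : p.Prime) (hodd : Odd p) {w z : ℤ} {c : ℕ} (hc : 1 ≤ c)
    (hz : ¬ (p:ℤ) ∣ z) (hw : w - 1 = (p:ℤ)^c * z) {j e : ℕ} (he : c + j < e) :
    ¬ (p:ℤ)^e ∣ w ^ (p^j) - 1 := by
  obtain ⟨z', h1, h2⟩ := exact_iter hp hodd hc hw j
  intro hdvd
  rw [h1] at hdvd
  have hz' : ¬ (p:ℤ) ∣ z' := by
    intro h
    exact hz (by simpa using dvd_sub h h2)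
  have hstep : (p:ℤ)^(c+j+1) ∣ (p:ℤ)^(c+j) * z' := dvd_trans (pow_dvd_pow _ (by omega)) hdvd
  have hne : ((p:ℤ)^(c+j)) ≠ 0 := pow_ne_zero _ (by exact_mod_cast hp.pos.ne')
  rw [pow_succ] at hstep
  exact hz' ((mul_dvd_mul_iff_left hne).mp hstep)

lemma fermat_int (hp : p.Prime) {v : ℤ} (hv : ¬ (p:ℤ) ∣ v) :
    (p:ℤ) ∣ v ^ (p - 1) - 1 := by
  haveI : Fact p.Prime := ⟨hp⟩
  have h0 : ((v : ZMod p)) ≠ 0 := by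
    rw [Ne, ZMod.intCast_zmod_eq_zero_iff_dvd]
    exact hv
  have := ZMod.pow_card_sub_one_eq_one h0
  have h2 : ((v ^ (p-1) - 1 : ℤ) : ZMod p) = 0 := by
    push_cast
    rw [this]
    ring
  exact (ZMod.intCast_zmod_eq_zero_iff_dvd _ _).mp h2

lemma not_dvd_pow_sub_one_add_one (hp : p.Prime) (hodd : Odd p) {v : ℤ} (hv : ¬ (p:ℤ) ∣ v) :
    ¬ (p:ℤ) ∣ v ^ (p - 1) + 1 := by
  intro h
  have h1 := fermat_int hp hv
  have h2 : (p:ℤ) ∣ 2 := by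
    have := dvd_sub h h1
    simpa using this
  have h3 : p ∣ 2 := by exact_mod_cast h2
  have := Nat.le_of_dvd (by norm_num) h3
  have := hp.two_le
  interval_cases p
  · exact absurd hodd (by decide)

/-- key equivalence: `p^(J+s'+1) ∣ v^(2(p-1)p^J) - 1 ↔ p^(s'+1) ∣ v^(p-1) - 1` -/

lemma K_iff_big (hp : p.Prime) (hodd : Odd p) {v : ℤ} (hv : ¬ (p:ℤ) ∣ v) (s' J : ℕ) :
    ((p:ℤ)^(J + s' + 1) ∣ v ^ (2*(p-1)*p^J) - 1) ↔ ((p:ℤ)^(s'+1) ∣ v^(p-1) - 1) := by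
  have hfac : v ^ (2*(p-1)) - 1 = (v^(p-1) - 1) * (v^(p-1) + 1) := by
    rw [show 2*(p-1) = (p-1)*2 from mul_comm _ _, pow_mul]
    ring
  have hpowD : v ^ (2*(p-1)*p^J) = (v ^ (2*(p-1)))^(p^J) := by rw [pow_mul]
  constructor
  · -- hard direction: contrapositive
    intro hbig
    by_contra hK
    have hF := fermat_int hp hv
    have hne : v ^ (p-1) - 1 ≠ 0 := by
      intro h0
      exact hK (h0 ▸ dvd_zero _)
    have hs1 : 1 ≤ s' := by
      rcases Nat.eq_zero_or_pos s' with h | h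
      · subst h; simp at hK; exact absurd hF hK
      · omega
    set X := v ^ (p-1) - 1 with hX
    classical
    set c := Nat.findGreatest (fun n => (p:ℤ)^n ∣ X) s' with hcdef
    have hc1 : 1 ≤ c := Nat.le_findGreatest hs1 (by simpa using hF)
    have hcd : (p:ℤ)^c ∣ X := Nat.findGreatest_spec (P := fun n => (p:ℤ)^n ∣ X) hs1 (by simpa using hF)
    have hcnd : ¬ (p:ℤ)^(c+1) ∣ X := by
      rcases Nat.lt_or_ge c s' with h | h
      · exact Nat.findGreatest_is_greatest (Nat.lt_succ_of_le (Nat.le_refl c)) (by omega)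
      · have hcs : c = s' := le_antisymm (Nat.findGreatest_le s') h
        rw [hcs]
        exact hK
    have hcs' : c ≤ s' := Nat.findGreatest_le s'
    obtain ⟨z₁, hz₁⟩ := hcd
    have hz₁nd : ¬ (p:ℤ) ∣ z₁ := by
      intro h
      apply hcnd
      rw [hz₁, pow_succ]
      exact mul_dvd_mul_left _ h
    have hw : v ^ (2*(p-1)) - 1 = (p:ℤ)^c * (z₁ * (v^(p-1)+1)) := by
      rw [hfac, hz₁]; ring
    have hznd : ¬ (p:ℤ) ∣ z₁ * (v^(p-1)+1) := by
      intro h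
      have hPrime : Prime (p:ℤ) := Nat.prime_iff_prime_int.mp hp
      rcases hPrime.dvd_mul.mp h with h | h
      · exact hz₁nd h
      · exact not_dvd_pow_sub_one_add_one hp hodd hv h
    have := exact_val hp hodd hc1 hznd hw (j := J) (e := J + s' + 1) (by omega)
    rw [← hpowD] at this
    exact this hbig
  · intro hK
    have hdvd : (p:ℤ)^(s'+1) ∣ v ^ (2*(p-1)) - 1 := by
      rw [hfac]
      exact dvd_mul_of_dvd_left hK _
    have := iter_dvd hp (by omega : 1 ≤ s'+1) hdvd J
    rw [one_pow, ← hpowD] at this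
    have he : s' + 1 + J = J + s' + 1 := by omega
    rw [he] at this
    exact this

lemma card_filter_mul_shift {q : ℕ} (hq : 0 < q) (R R' : ℕ → Prop)
    [DecidablePred R] [DecidablePred R']
    (hRinv : ∀ x y, x ≡ y [MOD q] → (R x ↔ R y))
    (hR'inv : ∀ x y, x ≡ y [MOD q] → (R' x ↔ R' y))
    {u₀ u₁ : ℕ} (hu : u₀ * u₁ ≡ 1 [MOD q])
    (hrel : ∀ v, R (u₀ * v) ↔ R' v) :
    ((range q).filter R).card = ((range q).filter R').card := by
  have h3 : ∀ w, u₀ * (u₁ * w) ≡ w [MOD q] := by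
    intro w
    calc u₀ * (u₁ * w) = (u₀ * u₁) * w := by ring
      _ ≡ 1 * w [MOD q] := hu.mul_right w
      _ = w := one_mul w
  apply Finset.card_bij (fun u _ => (u₁ * u) % q)
  · intro u hu'
    simp only [mem_filter, mem_range] at hu' ⊢
    refine ⟨Nat.mod_lt _ hq, ?_⟩
    rw [hR'inv _ _ (Nat.mod_modEq _ _), ← hrel, hRinv _ _ (h3 u)]
    exact hu'.2
  · intro x hx y hy h
    simp only [mem_filter, mem_range] at hx hy
    have h1 : u₁ * x ≡ u₁ * y [MOD q] := (Nat.mod_modEq _ _).symm.trans (h ▸ Nat.mod_modEq _ _)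
    have h2 : u₀ * (u₁ * x) ≡ u₀ * (u₁ * y) [MOD q] := h1.mul_left _
    have h4 : x ≡ y [MOD q] := ((h3 x).symm.trans h2).trans (h3 y)
    rw [Nat.ModEq] at h4
    rwa [Nat.mod_eq_of_lt hx.1, Nat.mod_eq_of_lt hy.1] at h4
  · intro v hv
    simp only [mem_filter, mem_range] at hv
    refine ⟨(u₀ * v) % q, ?_, ?_⟩
    · simp only [mem_filter, mem_range]
      refine ⟨Nat.mod_lt _ hq, ?_⟩
      rw [hRinv _ _ (Nat.mod_modEq _ _), hrel]
      exact hv.2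
    · have h1 : u₁ * ((u₀ * v) % q) ≡ u₁ * (u₀ * v) [MOD q] := (Nat.mod_modEq _ _).mul_left _
      have h2 : u₁ * (u₀ * v) ≡ v [MOD q] := by
        calc u₁ * (u₀ * v) = (u₀ * u₁) * v := by ring
          _ ≡ 1 * v [MOD q] := hu.mul_right v
          _ = v := one_mul v
      have h5 := h1.trans h2
      rw [Nat.ModEq] at h5
      rw [h5]
      exact Nat.mod_eq_of_lt hv.1

lemma card_filter_period {r : ℕ} (hr : 0 < r) (c : ℕ) (R : ℕ → Prop) [DecidablePred R]
    (hinv : ∀ x y, x ≡ y [MOD r] → (R x ↔ R y)) :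
    ((range (r * c)).filter R).card = c * ((range r).filter R).card := by
  induction c with
  | zero => simp
  | succ n ih =>
    have hsplit : range (r * (n+1)) = range (r * n) ∪ (range r).map (addLeftEmbedding (r * n)) := by
      rw [Nat.mul_succ, Finset.range_add]
    rw [hsplit, Finset.filter_union, Finset.card_union_of_disjoint, ih]
    · have h1 : ((range r).map (addLeftEmbedding (r * n))).filter R
          = ((range r).filter (fun x => R (r * n + x))).map (addLeftEmbedding (r * n)) := by
        rw [Finset.filter_map]
        rfl
      rw [h1, Finset.card_map]
      have h2 : (range r).filter (fun x => R (r * n + x)) = (range r).filter R := by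
        apply Finset.filter_congr
        intro x _
        have hmod : r * n + x ≡ x [MOD r] := by
          show (r * n + x) % r = x % r
          simpa using Nat.mul_add_mod r n x
        rw [hinv _ _ hmod]
      rw [h2]
      ring
    · apply Finset.disjoint_filter_filter
      rw [Finset.disjoint_left]
      intro x hx hx'
      simp only [mem_range, Finset.mem_map, addLeftEmbedding_apply] at hx hx'
      omega

lemma natmod_int {a b n : ℕ} (h : a ≡ b [MOD n]) : (n:ℤ) ∣ (b:ℤ) - a :=
  Int.ModEq.dvd (Int.natCast_modEq_iff.mpr h)

lemma teich_unique (hp : p.Prime) {s' : ℕ} {v v' : ℕ} (hv : ¬ p ∣ v)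
    (h1 : (p:ℤ)^(s'+1) ∣ (v:ℤ)^(p-1) - 1) (h1' : (p:ℤ)^(s'+1) ∣ (v':ℤ)^(p-1) - 1)
    (hmod : v % p = v' % p) : (p:ℤ)^(s'+1) ∣ (v':ℤ) - v := by
  have hPrime : Prime (p:ℤ) := Nat.prime_iff_prime_int.mp hp
  have hd : (p:ℤ) ∣ (v':ℤ) - v := natmod_int (hmod : v ≡ v' [MOD p])
  have hdiff : (p:ℤ)^(s'+1) ∣ (v':ℤ)^(p-1) - (v:ℤ)^(p-1) := by
    have := dvd_sub h1' h1
    simpa using this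
  have key := geom_sum₂_mul (v':ℤ) (v:ℤ) (p-1)
  have hSig : ¬ (p:ℤ) ∣ (∑ i ∈ range (p-1), (v':ℤ) ^ i * (v:ℤ) ^ (p - 1 - 1 - i)) := by
    intro h
    have hcong := geom_cong (p := p) (v':ℤ) (v:ℤ) (p-1) hd
    have h2 : (p:ℤ) ∣ ((p-1 : ℕ):ℤ) * (v:ℤ)^(p-1-1) := by
      have := dvd_sub h hcong
      simpa using this
    rcases hPrime.dvd_mul.mp h2 with h3 | h3
    · have h4 : p ∣ p - 1 := Int.natCast_dvd_natCast.mp h3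
      have := Nat.le_of_dvd (by have := hp.two_le; omega) h4
      have := hp.two_le
      omega
    · have h4 : (p:ℤ) ∣ (v:ℤ) := hPrime.dvd_of_dvd_pow h3
      exact hv (Int.natCast_dvd_natCast.mp h4)
  have hcop : IsCoprime ((p:ℤ)^(s'+1)) (∑ i ∈ range (p-1), (v':ℤ) ^ i * (v:ℤ) ^ (p - 1 - 1 - i)) :=
    ((Prime.coprime_iff_not_dvd hPrime).mpr hSig).pow_left
  apply hcop.dvd_of_dvd_mul_left
  rw [key]
  exact hdiff

lemma fermat_pow_nat (hp : p.Prime) (x n : ℕ) : x ^ (p ^ n) ≡ x [MOD p] := by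
  haveI : Fact p.Prime := ⟨hp⟩
  rw [← ZMod.natCast_eq_natCast_iff]
  push_cast
  induction n with
  | zero => simp
  | succ m ih => rw [pow_succ, pow_mul, ih, ZMod.pow_card]

lemma card_torsion (hp : p.Prime) (hodd : Odd p) (s' : ℕ) :
    ((range (p^(s'+1))).filter (fun v => ¬ p ∣ v ∧ (p:ℤ)^(s'+1) ∣ (v:ℤ)^(p-1) - 1)).card
      = p - 1 := by
  have hp2 := hp.two_le
  have hq : 0 < p ^ (s'+1) := Nat.pow_pos (by omega)
  have hbij : ((range (p^(s'+1))).filter (fun v => ¬ p ∣ v ∧ (p:ℤ)^(s'+1) ∣ (v:ℤ)^(p-1) - 1)).card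
      = (Finset.Ico 1 p).card := by
    apply Finset.card_bij (fun v _ => v % p)
    · intro v hv
      simp only [mem_filter, mem_range] at hv
      rw [Finset.mem_Ico]
      constructor
      · rcases Nat.eq_zero_or_pos (v % p) with h | h
        · exact absurd ((Nat.dvd_iff_mod_eq_zero.mpr h)) hv.2.1
        · exact h
      · exact Nat.mod_lt _ (by omega)
    · intro x hx y hy h
      simp only [mem_filter, mem_range] at hx hy
      have := teich_unique hp hx.2.1 hx.2.2 hy.2.2 h
      have h0 : ((y:ℤ) - x) = 0 := by
        apply Int.eq_zero_of_abs_lt_dvd this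
        have hx1 := hx.1; have hy1 := hy.1
        rw [abs_lt]
        constructor
        · have : ((x:ℤ)) < (p:ℤ)^(s'+1) := by exact_mod_cast hx1
          omega
        · have : ((y:ℤ)) < (p:ℤ)^(s'+1) := by exact_mod_cast hy1
          omega
      have : (x:ℤ) = y := by omega
      exact_mod_cast this
    · intro r hr
      rw [Finset.mem_Ico] at hr
      have hrp : ¬ p ∣ r := fun h => by have := Nat.le_of_dvd (by omega) h; omega
      refine ⟨(r ^ (p ^ s')) % (p ^ (s'+1)), ?_, ?_⟩
      · simp only [mem_filter, mem_range]
        refine ⟨Nat.mod_lt _ hq, ?_, ?_⟩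
        · rw [Nat.dvd_mod_iff (dvd_pow_self p (by omega : s'+1 ≠ 0))]
          intro h
          exact hrp (hp.dvd_of_dvd_pow h)
        · -- p^(s'+1) ∣ v^(p-1) - 1 where v = r^(p^s') % p^(s'+1)
          have hmod : ((r ^ (p ^ s')) % (p ^ (s'+1))) ≡ r ^ (p ^ s') [MOD p^(s'+1)] :=
            Nat.mod_modEq _ _
          have hdvd1 : ((p:ℤ))^(s'+1) ∣ ((r ^ (p ^ s') : ℕ) : ℤ) - (((r ^ (p ^ s')) % (p ^ (s'+1)) : ℕ) : ℤ) := by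
            have := natmod_int hmod
            exact_mod_cast this
          have hdvd2 : ((p:ℤ))^(s'+1) ∣ ((r ^ (p ^ s') : ℕ) : ℤ)^(p-1) - (((r ^ (p ^ s') % (p ^ (s'+1)) : ℕ)) : ℤ)^(p-1) :=
            dvd_trans hdvd1 (sub_dvd_pow_sub_pow _ _ _)
          have heuler : ((p:ℤ))^(s'+1) ∣ ((r ^ (p ^ s') : ℕ) : ℤ)^(p-1) - 1 := by
            have hcop : Nat.Coprime r (p^(s'+1)) :=
              ((Nat.Prime.coprime_iff_not_dvd hp).mpr hrp).symm.pow_right _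
            have := Nat.ModEq.pow_totient hcop
            rw [Nat.totient_prime_pow hp (by omega : 0 < s'+1)] at this
            have h2 : (((r ^ (p ^ s' * (p-1)) : ℕ)):ℤ) - 1 = (((r^(p^s'*(p-1)) :ℕ)):ℤ) - ((1:ℕ):ℤ) := by norm_num
            have h3 := natmod_int this.symm
            have h4 : ((p^(s'+1) : ℕ) : ℤ) = (p:ℤ)^(s'+1) := by push_cast; rfl
            rw [h4] at h3
            have h5 : ((r ^ (p ^ s') : ℕ) : ℤ)^(p-1) = ((r ^ (p ^ s' * (p-1)) : ℕ) : ℤ) := by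
              push_cast
              rw [← pow_mul]
            rw [h5]
            simpa using h3
          have := dvd_sub heuler hdvd2
          have hfin : ((r ^ (p ^ s') : ℕ) : ℤ)^(p-1) - 1 - (((r ^ (p ^ s') : ℕ) : ℤ)^(p-1) - (((r ^ (p ^ s') % (p ^ (s'+1)) : ℕ)) : ℤ)^(p-1)) = (((r ^ (p ^ s') % (p ^ (s'+1)) : ℕ)) : ℤ)^(p-1) - 1 := by ring
          rwa [hfin] at this
      · -- (r^(p^s') % p^(s'+1)) % p = r
        have h1 : (r ^ (p ^ s') % (p ^ (s'+1))) % p = r ^ (p ^ s') % p :=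
          Nat.mod_mod_of_dvd _ (dvd_pow_self p (by omega : s'+1 ≠ 0))
        rw [h1, fermat_pow_nat hp r s', Nat.mod_eq_of_lt hr.2]
  rw [hbij, Nat.card_Ico]

lemma exists_u0 (hp : p.Prime) (hodd : Odd p) {A B : ℤ} (J s : ℕ)
    (hA : ¬ (p:ℤ) ∣ A) (hAB : (p:ℤ)^(J+1) ∣ A + B) :
    ∃ u₀ : ℕ, ¬ p ∣ u₀ ∧ (p:ℤ)^(J+s+1) ∣ A * (u₀:ℤ)^(2*(p-1)*p^J) + B := by
  have hp2 := hp.two_le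
  have hPrime : Prime (p:ℤ) := Nat.prime_iff_prime_int.mp hp
  haveI : Fact p.Prime := ⟨hp⟩
  -- the element h = (1+p)^(2(p-1)) satisfies h - 1 = p * z₁ with p ∤ z₁
  set w₁ : ℤ := (1+(p:ℤ))^(p-1) with hw₁
  have hG := geom_sum_mul (1+(p:ℤ)) (p-1)
  have hw₁sub : w₁ - 1 = (∑ i ∈ range (p-1), (1+(p:ℤ))^i) * p := by
    rw [hw₁, ← hG]; ring_nf
  have hGnd : ¬ (p:ℤ) ∣ (∑ i ∈ range (p-1), (1+(p:ℤ))^i) := by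
    intro h
    have hc := geom_cong (p := p) (1+(p:ℤ)) 1 (p-1) (by simp)
    simp only [one_pow, mul_one] at hc
    have h2 : (p:ℤ) ∣ ((p-1 : ℕ):ℤ) := by
      have := dvd_sub h hc
      simpa using this
    have h4 : p ∣ p - 1 := Int.natCast_dvd_natCast.mp h2
    have := Nat.le_of_dvd (by omega) h4
    omega
  have hw₁nd : ¬ (p:ℤ) ∣ w₁ + 1 := by
    intro h
    have h1 : (p:ℤ) ∣ w₁ - 1 := hw₁sub ▸ dvd_mul_left _ _
    have h2 : (p:ℤ) ∣ 2 := by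
      have := dvd_sub h h1
      simpa using this
    have h3 : p ∣ 2 := by exact_mod_cast h2
    have := Nat.le_of_dvd (by norm_num) h3
    interval_cases p
    · exact absurd hodd (by decide)
  set h : ℤ := (1+(p:ℤ))^(2*(p-1)) with hh
  have hhsub : h - 1 = (p:ℤ)^1 * ((∑ i ∈ range (p-1), (1+(p:ℤ))^i) * (w₁ + 1)) := by
    have : h = w₁^2 := by rw [hh, hw₁, ← pow_mul, mul_comm 2 (p-1)]
    rw [this]
    have : w₁^2 - 1 = (w₁ - 1) * (w₁ + 1) := by ring
    rw [this, hw₁sub]; ring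
  have hznd : ¬ (p:ℤ) ∣ (∑ i ∈ range (p-1), (1+(p:ℤ))^i) * (w₁ + 1) := by
    intro hx
    rcases hPrime.dvd_mul.mp hx with hx | hx
    · exact hGnd hx
    · exact hw₁nd hx
  obtain ⟨z₀, hz₀, hz₀nd'⟩ := exact_iter hp hodd (le_refl 1) hhsub J
  have hz₀nd : ¬ (p:ℤ) ∣ z₀ := by
    intro hx
    exact hznd (by simpa using dvd_sub hx hz₀nd')
  set h₂ : ℤ := h ^ (p^J) with hh₂
  have hz₀' : h₂ - 1 = (p:ℤ)^(J+1) * z₀ := by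
    rw [hh₂, hz₀]; ring_nf
  have hh₂nd : ¬ (p:ℤ) ∣ h₂ := by
    intro hx
    have h1 : (p:ℤ) ∣ h₂ - 1 := hz₀' ▸ dvd_mul_of_dvd_left (dvd_pow_self _ (by omega : J+1 ≠ 0)) _
    have : (p:ℤ) ∣ 1 := by simpa using dvd_sub hx h1
    rcases Int.isUnit_iff.mp (isUnit_of_dvd_one this) with h | h <;> omega
  -- main induction
  have main : ∀ i : ℕ, ∃ n : ℕ, ∃ d : ℤ, A * h₂^n + B = (p:ℤ)^(J+1+i) * d := by
    intro i
    induction i with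
    | zero =>
      obtain ⟨d, hd⟩ := hAB
      exact ⟨0, d, by simpa using hd⟩
    | succ i ih =>
      obtain ⟨n, d, hnd⟩ := ih
      obtain ⟨zi, hzi, hzind'⟩ := exact_iter hp hodd (by omega : 1 ≤ J+1) hz₀' i
      have hzind : ¬ (p:ℤ) ∣ zi := by
        intro hx
        exact hz₀nd (by simpa using dvd_sub hx hzind')
      set M₀ : ℤ := A * h₂^n * zi with hM₀
      have hM₀nd : ¬ (p:ℤ) ∣ M₀ := by
        intro hx
        rcases hPrime.dvd_mul.mp hx with hx | hx
        · rcases hPrime.dvd_mul.mp hx with hx | hx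
          · exact hA hx
          · exact hh₂nd (hPrime.dvd_of_dvd_pow hx)
        · exact hzind hx
      have hM₀ne : ((M₀ : ZMod p)) ≠ 0 := by
        rw [Ne, ZMod.intCast_zmod_eq_zero_iff_dvd]; exact hM₀nd
      set jz : ZMod p := (-(d : ZMod p)) * (M₀ : ZMod p)⁻¹ with hjz
      set j : ℕ := jz.val with hj
      have hjcast : ((j:ℕ) : ZMod p) = jz := by
        rw [hj, ZMod.natCast_val, ZMod.cast_id]
      have hdj : (p:ℤ) ∣ d + M₀ * (j:ℕ) := by
        rw [← ZMod.intCast_zmod_eq_zero_iff_dvd]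
        push_cast
        rw [hjcast, hjz]
        field_simp
        ring
      set Gj : ℤ := ∑ l ∈ range j, (h₂^(p^i))^l with hGj
      have e1 : Gj * (h₂^(p^i) - 1) = (h₂^(p^i))^j - 1 := geom_sum_mul _ _
      have hGjcong : (p:ℤ) ∣ Gj - (j:ℕ) := by
        have hc := geom_cong (p := p) (h₂^(p^i)) 1 j ?_
        · simpa [hGj] using hc
        · rw [hzi]
          exact dvd_mul_of_dvd_left (dvd_pow_self _ (by omega : J+1+i ≠ 0)) _
      have hdvd : (p:ℤ) ∣ d + M₀ * Gj := by
        have : d + M₀ * Gj = (d + M₀ * (j:ℕ)) + M₀ * (Gj - (j:ℕ)) := by ring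
        rw [this]
        exact dvd_add hdj (dvd_mul_of_dvd_right hGjcong _)
      obtain ⟨d', hd'⟩ := hdvd
      refine ⟨n + p^i * j, d', ?_⟩
      have hexp : h₂ ^ (n + p^i * j) = h₂^n * (h₂^(p^i))^j := by rw [pow_add, pow_mul]
      calc A * h₂ ^ (n + p^i * j) + B
          = (A * h₂^n + B) + (A * h₂^n) * ((h₂^(p^i))^j - 1) := by rw [hexp]; ring
        _ = (p:ℤ)^(J+1+i) * d + (A*h₂^n) * (Gj * (h₂^(p^i) - 1)) := by rw [hnd, e1]
        _ = (p:ℤ)^(J+1+i) * d + (A*h₂^n) * (Gj * ((p:ℤ)^(J+1+i) * zi)) := by rw [hzi]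
        _ = (p:ℤ)^(J+1+i) * (d + M₀ * Gj) := by rw [hM₀]; ring
        _ = (p:ℤ)^(J+1+i) * ((p:ℤ) * d') := by rw [hd']
        _ = (p:ℤ)^(J+1+(i+1)) * d' := by ring
  obtain ⟨n, d, hnd⟩ := main s
  refine ⟨(1+p)^n, ?_, ?_⟩
  · intro hx
    have h1 := hp.dvd_of_dvd_pow hx
    have h2 : p ∣ 1 := by
      have h3 := Nat.dvd_sub h1 (dvd_refl p)
      simpa using h3
    have := Nat.le_of_dvd one_pos h2
    omega
  · have hcast : (((1+p)^n : ℕ) : ℤ)^(2*(p-1)*p^J) = h₂^n := by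
      push_cast
      rw [hh₂, hh]
      rw [← pow_mul, ← pow_mul, ← pow_mul, mul_comm n, mul_assoc]
    rw [hcast, hnd]
    have : J + s + 1 = J + 1 + s := by omega
    rw [this]
    exact Dvd.intro _ rfl

lemma dvd_iff_of_dvd_sub {n X Y : ℤ} (h : n ∣ X - Y) : (n ∣ X ↔ n ∣ Y) := by
  constructor
  · intro h2; simpa using dvd_sub h2 h
  · intro h2; simpa using dvd_add h h2

end CHV

open CHV


theorem count_high_valuation (p : ℕ) (hp : p.Prime) (hodd : Odd p)
    (a t : ℕ) (k : ℕ) (hk : 0 < k) (hdvd : p ^ (2 * a + t + 1) ∣ k)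
    (hkbig : p ^ a * (p - 1) < k)
    (f : Polynomial ℤ)
    (hf : f = X ^ ((k + p ^ a * (p - 1)) * p ^ t) + X ^ ((k - p ^ a * (p - 1)) * p ^ t))
    (s : ℕ) (hs : s ≤ a) :
    ((Finset.Icc 1 (p ^ (a + 1))).filter
      (fun u => ¬ p ∣ u ∧ ((p : ℤ) ^ (2 * a + 2 * t + s + 1)) ∣ (derivative f).eval (u : ℤ))).card
      = p ^ (a - s) * (p - 1) := by
  classical
  have hp2 := hp.two_le
  have hPrime : Prime (p:ℤ) := Nat.prime_iff_prime_int.mp hp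
  have hppos : (0:ℤ) < (p:ℤ) := by exact_mod_cast hp.pos
  set m : ℕ := p ^ a * (p - 1) with hm
  set q : ℕ := p ^ (a + 1) with hq
  have hqpos : 0 < q := Nat.pow_pos hp.pos
  obtain ⟨k₂, hk₂⟩ := hdvd
  set K : ℕ := p ^ (a + t + 1) * k₂ with hKdef
  have hkK : k = p ^ a * K := by
    rw [hk₂, hKdef, ← mul_assoc, ← pow_add]
    congr 2
    omega
  set A : ℤ := (K : ℤ) + ((p - 1 : ℕ) : ℤ) with hAdef
  set B : ℤ := (K : ℤ) - ((p - 1 : ℕ) : ℤ) with hBdef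
  have hpm1 : ¬ (p:ℤ) ∣ ((p - 1 : ℕ) : ℤ) := by
    intro h
    have h2 : p ∣ p - 1 := Int.natCast_dvd_natCast.mp h
    have := Nat.le_of_dvd (by omega) h2
    omega
  have hpK : (p:ℤ) ∣ (K : ℤ) := by
    rw [hKdef]
    push_cast
    exact dvd_mul_of_dvd_left (dvd_pow_self _ (by omega : a + t + 1 ≠ 0)) _
  have hpKh : (p:ℤ)^(a+t+1) ∣ (K : ℤ) := by
    rw [hKdef]; push_cast
    exact dvd_mul_of_dvd_left dvd_rfl _
  have hA : ¬ (p:ℤ) ∣ A := by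
    intro h
    apply hpm1
    have := dvd_sub h hpK
    simpa [hAdef] using this
  have hB : ¬ (p:ℤ) ∣ B := by
    intro h
    apply hpm1
    have := dvd_sub hpK h
    simpa [hBdef] using this
  have hAB : (p:ℤ)^(a+t+1) ∣ A + B := by
    have h1 : A + B = 2 * (K:ℤ) := by rw [hAdef, hBdef]; ring
    rw [h1]
    exact Dvd.dvd.mul_left hpKh 2
  set N : ℕ := (k + m) * p ^ t with hN
  set M : ℕ := (k - m) * p ^ t with hM
  set D : ℕ := 2 * (p - 1) * p ^ (a + t) with hD
  have hmk : m ≤ k := le_of_lt hkbig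
  have hMpos : 1 ≤ M := by
    rw [hM]
    have h1 : 1 ≤ k - m := by omega
    have h2 : 1 ≤ p ^ t := Nat.one_le_pow _ _ hp.pos
    exact Nat.one_le_iff_ne_zero.mpr (by positivity)
  have hNMD : N = M + D := by
    rw [hN, hM, hD]
    have h1 : k + m = (k - m) + 2 * m := by omega
    rw [h1, add_mul]
    congr 1
    rw [hm, pow_add]
    ring
  have hNc : ((N : ℕ) : ℤ) = (p:ℤ)^(a+t) * A := by
    rw [hN, hAdef]
    push_cast [hkK, hm]
    rw [pow_add]
    ring
  have hMc : ((M : ℕ) : ℤ) = (p:ℤ)^(a+t) * B := by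
    have h1 : ((M : ℕ) : ℤ) = ((k:ℤ) - (m:ℤ)) * (p:ℤ)^t := by
      rw [hM]
      push_cast [hmk]
      ring
    have h2 : (k:ℤ) = (p:ℤ)^a * (K:ℤ) := by exact_mod_cast congrArg (Nat.cast : ℕ → ℤ) hkK
    have h3 : (m:ℤ) = (p:ℤ)^a * ((p-1:ℕ):ℤ) := by rw [hm]; push_cast; ring
    rw [h1, h2, h3, hBdef, pow_add]
    ring
  have heval : ∀ u : ℤ, (derivative f).eval u = (N:ℤ) * u ^ (N - 1) + (M:ℤ) * u ^ (M - 1) := by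
    intro u
    rw [hf]
    simp only [derivative_add, derivative_X_pow, eval_add, eval_mul, eval_pow, eval_natCast,
      eval_X, eval_C]
  have heq : ∀ u : ℤ, (derivative f).eval u
      = u ^ (M - 1) * ((p:ℤ)^(a+t) * (A * u ^ D + B)) := by
    intro u
    rw [heval u, hNc, hMc]
    have h1 : N - 1 = (M - 1) + D := by omega
    rw [h1, pow_add]
    ring
  have stepA : ∀ u : ℕ, ¬ p ∣ u →
      (((p : ℤ) ^ (2*a+2*t+s+1)) ∣ (derivative f).eval (u : ℤ) ↔
        (p:ℤ)^(a+t+s+1) ∣ A * (u:ℤ) ^ D + B) := by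
    intro u hu
    have hu' : ¬ (p:ℤ) ∣ (u:ℤ) := fun h => hu (Int.natCast_dvd_natCast.mp h)
    have hcop : IsCoprime ((p:ℤ)^(2*a+2*t+s+1)) ((u:ℤ)^(M-1)) :=
      ((Prime.coprime_iff_not_dvd hPrime).mpr hu').pow
    have hsplit : (2*a+2*t+s+1) = (a+t) + (a+t+s+1) := by omega
    rw [heq u]
    constructor
    · intro h
      have h2 : (p:ℤ)^(2*a+2*t+s+1) ∣ (p:ℤ)^(a+t) * (A * (u:ℤ)^D + B) :=
        hcop.dvd_of_dvd_mul_left h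
      rw [hsplit, pow_add] at h2
      exact (mul_dvd_mul_iff_left (pow_ne_zero (a+t) (by positivity : (p:ℤ) ≠ 0))).mp h2
    · intro h
      apply Dvd.dvd.mul_left
      rw [hsplit, pow_add]
      exact mul_dvd_mul_left _ h
  -- predicates
  set Rq : ℕ → Prop := fun u => ¬ p ∣ u ∧ (p:ℤ)^(a+t+s+1) ∣ A * (u:ℤ) ^ D + B with hRq
  set Rk : ℕ → Prop := fun u => ¬ p ∣ u ∧ (p:ℤ)^(s+1) ∣ (u:ℤ)^(p-1) - 1 with hRk
  have hstep1 : (Finset.Icc 1 q).filter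
      (fun u => ¬ p ∣ u ∧ ((p : ℤ) ^ (2 * a + 2 * t + s + 1)) ∣ (derivative f).eval (u : ℤ))
      = (Finset.Icc 1 q).filter Rq := by
    apply Finset.filter_congr
    intro u _
    exact and_congr_right fun hu => stepA u hu
  have hstep2 : (Finset.Icc 1 q).filter Rq = (range q).filter Rq := by
    ext x
    simp only [mem_filter, Finset.mem_Icc, mem_range]
    constructor
    · rintro ⟨⟨h1, h2⟩, h3⟩
      refine ⟨?_, h3⟩
      rcases Nat.lt_or_ge x q with h | h
      · exact h
      · exfalso
        have hxq : x = q := by omega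
        apply h3.1
        rw [hxq, hq]
        exact dvd_pow_self p (by omega)
    · rintro ⟨h1, h3⟩
      refine ⟨⟨?_, by omega⟩, h3⟩
      rcases Nat.eq_zero_or_pos x with h | h
      · exfalso; apply h3.1; rw [h]; exact dvd_zero p
      · exact h
  -- invariance lemmas
  have hdvd_mod : ∀ r : ℕ, 1 ≤ r → ∀ x y : ℕ, x ≡ y [MOD p ^ r] → (p ∣ x ↔ p ∣ y) := by
    intro r hr x y hxy
    have h1 : x ≡ y [MOD p] := hxy.of_dvd (dvd_pow_self p (by omega))
    constructor
    · intro h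
      exact Nat.modEq_zero_iff_dvd.mp (h1.symm.trans (Nat.modEq_zero_iff_dvd.mpr h))
    · intro h
      exact Nat.modEq_zero_iff_dvd.mp (h1.trans (Nat.modEq_zero_iff_dvd.mpr h))
  have hint_mod : ∀ r : ℕ, ∀ x y : ℕ, x ≡ y [MOD p ^ r] → (p:ℤ)^r ∣ (x:ℤ) - (y:ℤ) := by
    intro r x y hxy
    have := natmod_int hxy.symm
    have hc : ((p^r : ℕ) : ℤ) = (p:ℤ)^r := by push_cast; ring
    rwa [hc] at this
  have hRkinv2 : ∀ x y, x ≡ y [MOD p^(s+1)] → (Rk x ↔ Rk y) := by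
    intro x y hxy
    have h1 := hint_mod (s+1) x y hxy
    have h2 : (p:ℤ)^(s+1) ∣ (x:ℤ)^(p-1) - (y:ℤ)^(p-1) :=
      dvd_trans h1 (sub_dvd_pow_sub_pow _ _ _)
    rw [hRk]
    apply and_congr (not_congr (hdvd_mod (s+1) (by omega) x y hxy))
    apply dvd_iff_of_dvd_sub
    have h3 : ((x:ℤ)^(p-1) - 1) - ((y:ℤ)^(p-1) - 1) = (x:ℤ)^(p-1) - (y:ℤ)^(p-1) := by ring
    rw [h3]
    exact h2
  have hq_to_s : ∀ x y : ℕ, x ≡ y [MOD q] → x ≡ y [MOD p^(s+1)] := by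
    intro x y hxy
    exact hxy.of_dvd (by rw [hq]; exact pow_dvd_pow p (by omega))
  have hRkinv : ∀ x y, x ≡ y [MOD q] → (Rk x ↔ Rk y) := fun x y hxy =>
    hRkinv2 x y (hq_to_s x y hxy)
  have hRqinv : ∀ x y, x ≡ y [MOD q] → (Rq x ↔ Rq y) := by
    intro x y hxy
    have h1 : (p:ℤ)^(a+1) ∣ (x:ℤ) - (y:ℤ) := by
      have := hint_mod (a+1) x y (by rwa [← hq])
      exact this
    have h2 : (p:ℤ)^(a+1) ∣ (x:ℤ)^(2*(p-1)) - (y:ℤ)^(2*(p-1)) :=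
      dvd_trans h1 (sub_dvd_pow_sub_pow _ _ _)
    have h3 := iter_dvd hp (by omega : 1 ≤ a+1) h2 (a+t)
    have h4 : (p:ℤ)^(a+t+s+1) ∣ (x:ℤ)^D - (y:ℤ)^D := by
      rw [hD, pow_mul (x:ℤ) (2*(p-1)) (p^(a+t)), pow_mul (y:ℤ) (2*(p-1)) (p^(a+t))]
      exact dvd_trans (pow_dvd_pow _ (by omega : a+t+s+1 ≤ a+1+(a+t))) h3
    rw [hRq]
    apply and_congr (not_congr (hdvd_mod (a+1) (by omega) x y (by rwa [← hq])))
    apply dvd_iff_of_dvd_sub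
    have h5 : (A * (x:ℤ)^D + B) - (A * (y:ℤ)^D + B) = A * ((x:ℤ)^D - (y:ℤ)^D) := by ring
    rw [h5]
    exact dvd_mul_of_dvd_right h4 _
  -- shift element
  obtain ⟨u₀, hu₀p, hu₀Q⟩ := exists_u0 hp hodd (A := A) (B := B) (a+t) s hA hAB
  have hu₀Q' : (p:ℤ)^(a+t+s+1) ∣ A * (u₀:ℤ)^D + B := by
    rw [hD]
    exact hu₀Q
  have hu₀q : Nat.Coprime u₀ q := by
    rw [hq]
    exact ((Nat.Prime.coprime_iff_not_dvd hp).mpr hu₀p).symm.pow_right _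
  have htot : 1 ≤ q.totient := Nat.totient_pos.mpr hqpos
  have hmul : u₀ * u₀^(q.totient - 1) ≡ 1 [MOD q] := by
    have heq2 : u₀ * u₀^(q.totient - 1) = u₀^(q.totient) := by
      rw [← pow_succ']
      congr 1
      omega
    rw [heq2]
    exact Nat.ModEq.pow_totient hu₀q
  have hQrel : ∀ v : ℕ, ¬ p ∣ v →
      ((p:ℤ)^(a+t+s+1) ∣ A * ((u₀*v : ℕ):ℤ)^D + B ↔ (p:ℤ)^(s+1) ∣ (v:ℤ)^(p-1) - 1) := by
    intro v hv
    have hv' : ¬ (p:ℤ) ∣ (v:ℤ) := fun h => hv (Int.natCast_dvd_natCast.mp h)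
    have hu₀' : ¬ (p:ℤ) ∣ (u₀:ℤ) := fun h => hu₀p (Int.natCast_dvd_natCast.mp h)
    have hcast : ((u₀*v : ℕ):ℤ) = (u₀:ℤ) * (v:ℤ) := by push_cast; ring
    have hid : A * ((u₀:ℤ) * (v:ℤ))^D + B
        = (A * (u₀:ℤ)^D + B) + (A * (u₀:ℤ)^D) * ((v:ℤ)^D - 1) := by
      rw [mul_pow]; ring
    have h1 : ((p:ℤ)^(a+t+s+1) ∣ A * ((u₀*v : ℕ):ℤ)^D + B ↔
        (p:ℤ)^(a+t+s+1) ∣ (A * (u₀:ℤ)^D) * ((v:ℤ)^D - 1)) := by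
      rw [hcast, hid]
      constructor
      · intro h; simpa using dvd_sub h hu₀Q'
      · intro h; exact dvd_add hu₀Q' h
    have hnd : ¬ (p:ℤ) ∣ A * (u₀:ℤ)^D := by
      intro h
      rcases hPrime.dvd_mul.mp h with h | h
      · exact hA h
      · exact hu₀' (hPrime.dvd_of_dvd_pow h)
    have hcopu : IsCoprime ((p:ℤ)^(a+t+s+1)) (A * (u₀:ℤ)^D) :=
      ((Prime.coprime_iff_not_dvd hPrime).mpr hnd).pow_left
    have h2 : ((p:ℤ)^(a+t+s+1) ∣ (A * (u₀:ℤ)^D) * ((v:ℤ)^D - 1) ↔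
        (p:ℤ)^(a+t+s+1) ∣ (v:ℤ)^D - 1) := by
      constructor
      · exact fun h => hcopu.dvd_of_dvd_mul_left h
      · exact fun h => Dvd.dvd.mul_left h _
    rw [h1, h2, hD]
    exact K_iff_big hp hodd hv' s (a+t)
  have hrel : ∀ v, Rq (u₀ * v) ↔ Rk v := by
    intro v
    rw [hRq, hRk]
    constructor
    · rintro ⟨h1, h2⟩
      have hv : ¬ p ∣ v := fun h => h1 (Dvd.dvd.mul_left h u₀)
      exact ⟨hv, (hQrel v hv).mp h2⟩
    · rintro ⟨h1, h2⟩
      refine ⟨?_, (hQrel v h1).mpr h2⟩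
      intro h
      rcases (Nat.Prime.dvd_mul hp).mp h with h | h
      · exact hu₀p h
      · exact h1 h
  -- chain of cardinalities
  rw [hstep1, hstep2]
  rw [card_filter_mul_shift hqpos Rq Rk hRqinv hRkinv hmul hrel]
  have hqsplit : q = p^(s+1) * p^(a-s) := by
    rw [hq, ← pow_add]
    congr 1
    omega
  rw [hqsplit, card_filter_period (Nat.pow_pos hp.pos) (p^(a-s)) Rk hRkinv2]
  have hfin : ((range (p^(s+1))).filter Rk).card = p - 1 := by
    have hcongr : (range (p^(s+1))).filter Rk
        = (range (p^(s+1))).filter (fun v => ¬ p ∣ v ∧ (p:ℤ)^(s+1) ∣ (v:ℤ)^(p-1) - 1) := by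
      apply Finset.filter_congr
      intro x _
      rw [hRk]
    rw [hcongr]
    exact card_torsion hp hodd s
  rw [hfin]
end
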